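/- arXiv:2312.14573 — 5 statements merged into one kernel-verified Lean document; each statement's English description precedes it below -/
import Mathlib

section
/- If φ is truth-conditional, then for every model M and world w: M,w ⊨ □_a φ iff M,w ⊨ ⊞_a φ iff M,v ⊨ φ for all v ∈ σ_a(w). -/
structure PreModel (W : Type) (A : Type) (P : Type) where
  Sig : A → W → Set (Set W)
  V : P → Set W

namespace PreModel

variable {W A P : Type}

def sigma (M : PreModel W A P) (a : A) (w : W) : Set W := ⋃₀ M.Sig a w

def IsInqEpi (M : PreModel W A P) : Prop :=
  (∀ a w, (M.Sig a w).Nonempty) ∧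
  (∀ a w, ∀ s ∈ M.Sig a w, ∀ t ⊆ s, t ∈ M.Sig a w) ∧
  (∀ a w, w ∈ M.sigma a w) ∧
  (∀ a w v, v ∈ M.sigma a w → M.Sig a v = M.Sig a w)

end PreModel

inductive Formula (A : Type) (P : Type) : Type
  | atom (p : P)
  | bot
  | and (φ ψ : Formula A P)
  | impl (φ ψ : Formula A P)
  | disj (φ ψ : Formula A P)
  | box (a : A) (φ : Formula A P)
  | wbox (a : A) (φ : Formula A P)

def support {W A P : Type} (M : PreModel W A P) : Formula A P → Set W → Prop
  | .atom p, s => s ⊆ M.V p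
  | .bot, s => s = ∅
  | .and φ ψ, s => support M φ s ∧ support M ψ s
  | .impl φ ψ, s => ∀ t ⊆ s, support M φ t → support M ψ t
  | .disj φ ψ, s => support M φ s ∨ support M ψ s
  | .box a φ, s => ∀ w ∈ s, support M φ (M.sigma a w)
  | .wbox a φ, s => ∀ w ∈ s, ∀ t ∈ M.Sig a w, support M φ t

def TruthConditional {A P : Type} (φ : Formula A P) : Prop :=
  ∀ (W : Type) (M : PreModel W A P), M.IsInqEpi →
    ∀ s : Set W, support M φ s ↔ ∀ w ∈ s, support M φ {w}

/-! In an inquisitive epistemic model every `t ∈ Σ_a(w)` is contained in `σ_a(w)`, and by downward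
closure every singleton `{v} ⊆ σ_a(w)` belongs to `Σ_a(w)`. For a truth-conditional `φ`, support at
a state is truth at each of its worlds, so both `□_a φ` and `⊞_a φ` reduce to truth of `φ` at every
world of `σ_a(w)`. -/

namespace PreModel

variable {W A P : Type} {M : PreModel W A P}

theorem IsInqEpi.singleton_mem_Sig (hM : M.IsInqEpi) {a : A} {w v : W} (hv : v ∈ M.sigma a w) :
    {v} ∈ M.Sig a w := by
  obtain ⟨t, ht, hvt⟩ := hv
  exact hM.2.1 a w t ht {v} (Set.singleton_subset_iff.mpr hvt)

end PreModel

namespace TruthConditional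

variable {W A P : Type} {M : PreModel W A P} {φ : Formula A P}

theorem support_iff (hφ : TruthConditional φ) (hM : M.IsInqEpi) (s : Set W) :
    support M φ s ↔ ∀ w ∈ s, support M φ {w} :=
  hφ W M hM s

theorem support_box_singleton_iff (hφ : TruthConditional φ) (hM : M.IsInqEpi) (a : A) (w : W) :
    support M (.box a φ) {w} ↔ ∀ v ∈ M.sigma a w, support M φ {v} := by
  simp only [support, Set.mem_singleton_iff, forall_eq]
  exact hφ.support_iff hM _

theorem support_wbox_singleton_iff (hφ : TruthConditional φ) (hM : M.IsInqEpi) (a : A) (w : W) :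
    support M (.wbox a φ) {w} ↔ ∀ v ∈ M.sigma a w, support M φ {v} := by
  simp only [support, Set.mem_singleton_iff, forall_eq]
  constructor
  · exact fun hSig v hv => hSig {v} (hM.singleton_mem_Sig hv)
  · exact fun hσ t ht => (hφ.support_iff hM t).mpr fun v hv => hσ v ⟨t, ht, hv⟩

end TruthConditional

/-- For truth-conditional φ, `□_a φ`, `⊞_a φ` and the Kripke box coincide. -/
theorem stmt_7 {W A P : Type} (M : PreModel W A P) (h : M.IsInqEpi)
    (φ : Formula A P) (hφ : TruthConditional φ) (a : A) (w : W) :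
    (support M (Formula.box a φ) {w} ↔ support M (Formula.wbox a φ) {w}) ∧
    (support M (Formula.box a φ) {w} ↔ ∀ v ∈ M.sigma a w, support M φ {v}) :=
  ⟨(hφ.support_box_singleton_iff h a w).trans (hφ.support_wbox_singleton_iff h a w).symm,
    hφ.support_box_singleton_iff h a w⟩
end

section
/- If π : M̂ → M is a bisimilar covering of inquisitive epistemic models, then the relation Z consisting of all pairs (û, π(û)) of worlds together with all pairs (ŝ, π(ŝ)) for ŝ ∈ Σ̂_a(ŵ) (some a, ŵ) is an inquisitive bisimulation; in particular M̂,ŵ ∼ M,π(ŵ) for every world ŵ. -/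
/-- An inquisitive bisimulation between two models: a pair of relations on
worlds and on information states with the usual atom/forth/back conditions. -/
def IsBisim {Wh W A P : Type} (Mh : PreModel Wh A P) (M : PreModel W A P)
    (Zw : Wh → W → Prop) (Zs : Set Wh → Set W → Prop) : Prop :=
  (∀ wh w, Zw wh w → ∀ p, wh ∈ Mh.V p ↔ w ∈ M.V p) ∧
  (∀ wh w, Zw wh w → ∀ a, ∀ sh ∈ Mh.Sig a wh, ∃ s ∈ M.Sig a w, Zs sh s) ∧
  (∀ wh w, Zw wh w → ∀ a, ∀ s ∈ M.Sig a w, ∃ sh ∈ Mh.Sig a wh, Zs sh s) ∧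
  (∀ sh s, Zs sh s →
    (∀ uh ∈ sh, ∃ u ∈ s, Zw uh u) ∧ (∀ u ∈ s, ∃ uh ∈ sh, Zw uh u))

/-- World-pointed bisimilarity. -/
def Bisimilar {Wh W A P : Type} (Mh : PreModel Wh A P) (M : PreModel W A P)
    (wh : Wh) (w : W) : Prop :=
  ∃ Zw Zs, IsBisim Mh M Zw Zs ∧ Zw wh w

/-- State-pointed bisimilarity: each world of either state is bisimilar
to some world of the other. -/
def StateBisimilar {Wh W A P : Type} (Mh : PreModel Wh A P) (M : PreModel W A P)
    (sh : Set Wh) (s : Set W) : Prop :=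
  (∀ uh ∈ sh, ∃ u ∈ s, Bisimilar Mh M uh u) ∧
  (∀ u ∈ s, ∃ uh ∈ sh, Bisimilar Mh M uh u)

/-- A bisimilar covering of inquisitive epistemic models. -/
def IsCovering {Wh W A P : Type} (Mh : PreModel Wh A P) (M : PreModel W A P)
    (π : Wh → W) : Prop :=
  Function.Surjective π ∧
  (∀ (a : A) (wh : Wh), (Set.image π) '' (Mh.Sig a wh) = M.Sig a (π wh)) ∧
  (∀ p, Mh.V p = π ⁻¹' (M.V p))

namespace IsCovering

variable {Wh W A P : Type} {Mh : PreModel Wh A P} {M : PreModel W A P} {π : Wh → W}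

theorem mem_V_iff (hπ : IsCovering Mh M π) (wh : Wh) (p : P) : wh ∈ Mh.V p ↔ π wh ∈ M.V p := by
  rw [hπ.2.2 p, Set.mem_preimage]

theorem image_mem_Sig (hπ : IsCovering Mh M π) {a : A} {wh : Wh} {sh : Set Wh}
    (hsh : sh ∈ Mh.Sig a wh) : π '' sh ∈ M.Sig a (π wh) :=
  hπ.2.1 a wh ▸ Set.mem_image_of_mem _ hsh

theorem exists_mem_Sig_image_eq (hπ : IsCovering Mh M π) {a : A} {wh : Wh} {s : Set W}
    (hs : s ∈ M.Sig a (π wh)) : ∃ sh ∈ Mh.Sig a wh, π '' sh = s := by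
  rwa [← hπ.2.1 a wh] at hs

theorem isBisim (hπ : IsCovering Mh M π) :
    IsBisim Mh M (fun uh u => u = π uh)
      (fun sh s => s = π '' sh ∧ ∃ (a : A) (wh : Wh), sh ∈ Mh.Sig a wh) := by
  refine ⟨?atoms, ?forth, ?back, ?states⟩
  case atoms =>
    rintro wh _ rfl p
    exact hπ.mem_V_iff wh p
  case forth =>
    rintro wh _ rfl a sh hsh
    exact ⟨π '' sh, hπ.image_mem_Sig hsh, rfl, a, wh, hsh⟩
  case back =>
    rintro wh _ rfl a s hs
    obtain ⟨sh, hsh, rfl⟩ := hπ.exists_mem_Sig_image_eq hs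
    exact ⟨sh, hsh, rfl, a, wh, hsh⟩
  case states =>
    rintro sh _ ⟨rfl, -⟩
    exact ⟨fun uh huh => ⟨π uh, Set.mem_image_of_mem π huh, rfl⟩,
      fun _ ⟨uh, huh, hu⟩ => ⟨uh, huh, hu.symm⟩⟩

end IsCovering

theorem stmt_12_general {Wh W A P : Type} (Mh : PreModel Wh A P) (M : PreModel W A P)
    (π : Wh → W) (hπ : IsCovering Mh M π) :
    IsBisim Mh M (fun uh u => u = π uh)
      (fun sh s => s = π '' sh ∧ ∃ (a : A) (wh : Wh), sh ∈ Mh.Sig a wh) ∧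
    (∀ wh : Wh, Bisimilar Mh M wh (π wh)) :=
  ⟨hπ.isBisim, fun _ => ⟨_, _, hπ.isBisim, rfl⟩⟩

/-- The canonical lifting of a covering projection is an inquisitive bisimulation;
in particular `Mh,wh ∼ M,π(wh)` for every world. -/
theorem stmt_12 {Wh W A P : Type} (Mh : PreModel Wh A P) (M : PreModel W A P)
    (hMh : Mh.IsInqEpi) (hM : M.IsInqEpi) (π : Wh → W) (hπ : IsCovering Mh M π) :
    IsBisim Mh M (fun uh u => u = π uh)
      (fun sh s => s = π '' sh ∧ ∃ (a : A) (wh : Wh), sh ∈ Mh.Sig a wh) ∧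
    (∀ wh : Wh, Bisimilar Mh M wh (π wh)) :=
  stmt_12_general Mh M π hπ
end

section
/- For any inquisitive epistemic model M and any K ∈ ℕ with K ≥ 1, the product model M × [K] — with worlds W × {1,…,K}, valuation pulled back along the projection π, and Σ_a(w,m) := { s ⊆ W×[K] : π(s) ∈ Σ_a(w) } — is an inquisitive epistemic model and π : M × [K] → M is a bisimilar covering. -/
/-- The product model `M × [K]`. -/
def prodModel {W A P : Type} (M : PreModel W A P) (K : ℕ) :
    PreModel (W × Fin K) A P where
  Sig a x := {s | Prod.fst '' s ∈ M.Sig a x.1}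
  V p := {x | x.1 ∈ M.V p}

/-! Pulling Σ back along any map π (a state is accepted at x when its image is accepted at π x)
preserves the inquisitive epistemic axioms, because each of them only concerns images under π:
factivity and introspection come from singletons `{π x} ∈ Σ_a(π x)`. When π is surjective, every
state of `M` is the image of its preimage, which makes π a bisimilar covering. The product
`M × [K]` is the pullback along the projection, which is surjective as soon as `K ≥ 1`. -/

namespace PreModel

variable {Wh W A P : Type}

def comap (M : PreModel W A P) (π : Wh → W) : PreModel Wh A P where
  Sig a x := {s | π '' s ∈ M.Sig a (π x)}
  V p := π ⁻¹' M.V p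

namespace IsInqEpi

variable {M : PreModel W A P}

theorem singleton_mem (hM : M.IsInqEpi) (a : A) (w : W) : {w} ∈ M.Sig a w := by
  obtain ⟨s, hs, hws⟩ := hM.2.2.1 a w
  exact hM.2.1 a w s hs {w} (Set.singleton_subset_iff.mpr hws)

theorem comap (hM : M.IsInqEpi) (π : Wh → W) : (M.comap π).IsInqEpi := by
  have hsingleton (a : A) (x : Wh) : {x} ∈ (M.comap π).Sig a x := by
    simpa [PreModel.comap] using hM.singleton_mem a (π x)
  refine ⟨fun a x => ⟨{x}, hsingleton a x⟩,
    fun a x s hs t hts => hM.2.1 a (π x) _ hs _ (Set.image_mono hts),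
    fun a x => ⟨{x}, hsingleton a x, rfl⟩, ?_⟩
  rintro a x y ⟨s, hs, hys⟩
  have hSig : M.Sig a (π y) = M.Sig a (π x) := hM.2.2.2 a (π x) (π y) ⟨_, hs, y, hys, rfl⟩
  ext t
  simp only [PreModel.comap, Set.mem_ofPred_eq, hSig]

end IsInqEpi

theorem isCovering_comap (M : PreModel W A P) {π : Wh → W} (hπ : Function.Surjective π) :
    IsCovering (M.comap π) M π := by
  refine ⟨hπ, fun a x => ?_, fun p => rfl⟩
  ext t
  constructor
  · rintro ⟨s, hs, rfl⟩
    exact hs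
  · intro ht
    have hpre : π '' (π ⁻¹' t) = t := Set.image_preimage_eq t hπ
    exact ⟨π ⁻¹' t, show π '' (π ⁻¹' t) ∈ _ by rwa [hpre], hpre⟩

end PreModel

theorem prodModel_eq_comap {W A P : Type} (M : PreModel W A P) (K : ℕ) :
    prodModel M K = M.comap Prod.fst :=
  rfl

/-- `M × [K]` is an inquisitive epistemic model and the projection is a
bisimilar covering. -/
theorem stmt_13 {W A P : Type} (M : PreModel W A P) (hM : M.IsInqEpi)
    (K : ℕ) (hK : 1 ≤ K) :
    (prodModel M K).IsInqEpi ∧ IsCovering (prodModel M K) M Prod.fst := by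
  have : Nonempty (Fin K) := ⟨⟨0, hK⟩⟩
  rw [prodModel_eq_comap]
  exact ⟨hM.comap Prod.fst, M.isCovering_comap Prod.fst_surjective⟩
end

section
/- The product model M × [K] is K-rich: for every world (w,m), agent a, and state s ∈ Σ_a(w,m), there is a state s' ∈ Σ_a(w,m) with s ⊆ s' such that every world of s' has at least K distinct copies in s' with the same projection, so that every bisimulation type realised in s is realised at least K times in s'. -/
/-! Take for `s'` the saturation `π⁻¹(π s)` of `s`. Membership in `Σ_a` of `M × [K]` depends
only on the projection, which saturation leaves unchanged, and the fibre of `s'` over each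
`w ∈ π s` is the full copy `{w} × Fin K`. -/

theorem Set.ncard_fiber_preimage_fst {α β : Type*} {t : Set α} {w : α} (hw : w ∈ t) :
    {u ∈ (Prod.fst ⁻¹' t : Set (α × β)) | u.1 = w}.ncard = Nat.card β := by
  have hfiber : {u ∈ (Prod.fst ⁻¹' t : Set (α × β)) | u.1 = w} = Prod.fst ⁻¹' {w} := by
    ext u
    exact ⟨And.right, fun hu => ⟨Set.mem_preimage.mpr (Set.mem_singleton_iff.mp hu ▸ hw), hu⟩⟩
  rw [hfiber, Set.preimage_fst_singleton_eq_range,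
    Set.ncard_range_of_injective (Prod.mk_right_injective w)]

theorem stmt_14_general {W A P : Type} (M : PreModel W A P)
    (K : ℕ) (x : W × Fin K) (a : A) (s : Set (W × Fin K))
    (hs : s ∈ (prodModel M K).Sig a x) :
    ∃ s' ∈ (prodModel M K).Sig a x, s ⊆ s' ∧
      (∀ v ∈ s', ∀ k : Fin K, (v.1, k) ∈ s') ∧
      (∀ v ∈ s', K ≤ Set.ncard {u ∈ s' | u.1 = v.1}) := by
  refine ⟨Prod.fst ⁻¹' (Prod.fst '' s), ?_, Set.subset_preimage_image _ _,
    fun _ hv _ => hv, fun v hv => ?_⟩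
  · change Prod.fst '' (Prod.fst ⁻¹' (Prod.fst '' s)) ∈ M.Sig a x.1
    rwa [Set.image_preimage_eq_of_subset (Set.image_subset_range _ _)]
  · rw [Set.ncard_fiber_preimage_fst (t := Prod.fst '' s) hv, Nat.card_fin]

/-- `M × [K]` is `K`-rich: every state of an inquisitive assignment extends to a
state of the same assignment in which every world has (at least) `K` distinct
copies with the same projection (hence every bisimulation type realised in `s`
is realised at least `K` times in `s'`). -/
theorem stmt_14 {W A P : Type} (M : PreModel W A P) (hM : M.IsInqEpi)
    (K : ℕ) (hK : 1 ≤ K) (x : W × Fin K) (a : A) (s : Set (W × Fin K))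
    (hs : s ∈ (prodModel M K).Sig a x) :
    ∃ s' ∈ (prodModel M K).Sig a x, s ⊆ s' ∧
      (∀ v ∈ s', ∀ k : Fin K, (v.1, k) ∈ s') ∧
      (∀ v ∈ s', K ≤ Set.ncard {u ∈ s' | u.1 = v.1}) :=
  stmt_14_general M K x a s hs
end

section
/- For a finite signature (finitely many agents and atomic propositions), n-bisimilarity of world-pointed inquisitive epistemic models implies agreement on all InqML formulas of modal nesting depth at most n: if M,w ∼ⁿ M',w' then for every φ ∈ InqML_n, M,w ⊨ φ iff M',w' ⊨ φ. -/
/-- `n`-bisimilarity of world-pointed models (defender's winning condition in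
the `n`-round inquisitive bisimulation game). -/
def worldBisim {W W' A P : Type} (M : PreModel W A P) (M' : PreModel W' A P) :
    ℕ → W → W' → Prop
  | 0 => fun w w' => ∀ p, w ∈ M.V p ↔ w' ∈ M'.V p
  | n + 1 => fun w w' =>
      (∀ p, w ∈ M.V p ↔ w' ∈ M'.V p) ∧
      (∀ a, ∀ s ∈ M.Sig a w, ∃ s' ∈ M'.Sig a w',
        (∀ u ∈ s, ∃ u' ∈ s', worldBisim M M' n u u') ∧
        (∀ u' ∈ s', ∃ u ∈ s, worldBisim M M' n u u')) ∧
      (∀ a, ∀ s' ∈ M'.Sig a w', ∃ s ∈ M.Sig a w,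
        (∀ u ∈ s, ∃ u' ∈ s', worldBisim M M' n u u') ∧
        (∀ u' ∈ s', ∃ u ∈ s, worldBisim M M' n u u'))

/-- `n`-bisimilarity of state-pointed models. -/
def stateBisim {W W' A P : Type} (M : PreModel W A P) (M' : PreModel W' A P)
    (n : ℕ) (s : Set W) (s' : Set W') : Prop :=
  (∀ u ∈ s, ∃ u' ∈ s', worldBisim M M' n u u') ∧
  (∀ u' ∈ s', ∃ u ∈ s, worldBisim M M' n u u')

/-- Modal nesting depth of a formula. -/
def depth {A P : Type} : Formula A P → ℕ
  | .atom _ => 0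
  | .bot => 0
  | .and φ ψ => max (depth φ) (depth ψ)
  | .impl φ ψ => max (depth φ) (depth ψ)
  | .disj φ ψ => max (depth φ) (depth ψ)
  | .box _ φ => depth φ + 1
  | .wbox _ φ => depth φ + 1

/-! The claim is strengthened to states: if every world of `s` is `n`-bisimilar to some world of
`s'` and vice versa, then `s` and `s'` support the same formulas of depth `≤ n`. This goes through
by induction on the formula because a round of the game matches each state in `Σ_a(w)`, and hence
also their union `σ_a(w)`, with one on the other side; and for an implication a substate `t'` of
`s'` is matched by the worlds of `s` bisimilar to some world of `t'`. -/

section Bisimulation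

variable {A P : Type} {W W' : Type} {M : PreModel W A P} {M' : PreModel W' A P}

theorem worldBisim.atom_iff {n : ℕ} {w : W} {w' : W'} (h : worldBisim M M' n w w') (p : P) :
    w ∈ M.V p ↔ w' ∈ M'.V p := by
  cases n with
  | zero => exact h p
  | succ n => exact h.1 p

theorem worldBisim.symm {n : ℕ} :
    ∀ {w : W} {w' : W'}, worldBisim M M' n w w' → worldBisim M' M n w' w := by
  induction n with
  | zero => exact fun h p => (h p).symm
  | succ n ih =>
    have swap : ∀ {s : Set W} {s' : Set W'}, stateBisim M M' n s s' → stateBisim M' M n s' s :=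
      fun ⟨hforth, hback⟩ =>
        ⟨fun u' hu' => (hback u' hu').imp fun _ ⟨hu, hb⟩ => ⟨hu, ih hb⟩,
          fun u hu => (hforth u hu).imp fun _ ⟨hu', hb⟩ => ⟨hu', ih hb⟩⟩
    rintro w w' ⟨hV, hforth, hback⟩
    exact ⟨fun p => (hV p).symm,
      fun a s' hs' => (hback a s' hs').imp fun _ ⟨hs, hss'⟩ => ⟨hs, swap hss'⟩,
      fun a s hs => (hforth a s hs).imp fun _ ⟨hs', hss'⟩ => ⟨hs', swap hss'⟩⟩

theorem stateBisim.symm {n : ℕ} {s : Set W} {s' : Set W'} (h : stateBisim M M' n s s') :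
    stateBisim M' M n s' s :=
  ⟨fun u' hu' => (h.2 u' hu').imp fun _ ⟨hu, hb⟩ => ⟨hu, hb.symm⟩,
    fun u hu => (h.1 u hu).imp fun _ ⟨hu', hb⟩ => ⟨hu', hb.symm⟩⟩

theorem stateBisim_singleton {n : ℕ} {w : W} {w' : W'} (h : worldBisim M M' n w w') :
    stateBisim M M' n {w} {w'} :=
  ⟨fun _ hu => ⟨w', rfl, hu ▸ h⟩, fun _ hu' => ⟨w, rfl, hu' ▸ h⟩⟩

theorem worldBisim.stateBisim_sigma {n : ℕ} {w : W} {w' : W'}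
    (h : worldBisim M M' (n + 1) w w') (a : A) :
    stateBisim M M' n (M.sigma a w) (M'.sigma a w') := by
  constructor
  · rintro u ⟨s, hs, hu⟩
    obtain ⟨s', hs', hforth, -⟩ := h.2.1 a s hs
    obtain ⟨u', hu', hb⟩ := hforth u hu
    exact ⟨u', ⟨s', hs', hu'⟩, hb⟩
  · rintro u' ⟨s', hs', hu'⟩
    obtain ⟨s, hs, -, hback⟩ := h.2.2 a s' hs'
    obtain ⟨u, hu, hb⟩ := hback u' hu'
    exact ⟨u, ⟨s, hs, hu⟩, hb⟩

theorem stateBisim.restrict_right {n : ℕ} {s : Set W} {s' t' : Set W'}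
    (h : stateBisim M M' n s s') (ht' : t' ⊆ s') :
    stateBisim M M' n {u ∈ s | ∃ u' ∈ t', worldBisim M M' n u u'} t' :=
  ⟨fun _ hu => hu.2, fun u' hu' =>
    let ⟨u, hu, hb⟩ := h.2 u' (ht' hu')
    ⟨u, ⟨hu, u', hu', hb⟩, hb⟩⟩

/- Bisimilarity is symmetric, so one direction suffices: for the antecedent of an implication
the induction hypothesis is applied to the swapped models. -/
theorem support_of_stateBisim (φ : Formula A P) :
    ∀ {W W' : Type} {M : PreModel W A P} {M' : PreModel W' A P} {n : ℕ}
      {s : Set W} {s' : Set W'}, stateBisim M M' n s s' → depth φ ≤ n →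
      support M φ s → support M' φ s' := by
  induction φ with
  | atom p =>
    intro _ _ _ _ _ _ _ hb _ hs u' hu'
    obtain ⟨u, hu, hwb⟩ := hb.2 u' hu'
    exact (hwb.atom_iff p).mp (hs hu)
  | bot =>
    intro _ _ _ _ _ _ s' hb _ (hs : _ = ∅)
    show s' = ∅
    refine Set.eq_empty_of_forall_notMem fun u' hu' => ?_
    obtain ⟨u, hu, -⟩ := hb.2 u' hu'
    exact hs.subset hu
  | and φ ψ ihφ ihψ =>
    intro _ _ _ _ _ _ _ hb hd hs
    exact ⟨ihφ hb (le_of_max_le_left hd) hs.1, ihψ hb (le_of_max_le_right hd) hs.2⟩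
  | impl φ ψ ihφ ihψ =>
    intro _ _ _ _ _ _ _ hb hd hs t' ht' hφ
    have ht := hb.restrict_right ht'
    exact ihψ ht (le_of_max_le_right hd)
      (hs _ (fun _ hu => hu.1) (ihφ ht.symm (le_of_max_le_left hd) hφ))
  | disj φ ψ ihφ ihψ =>
    intro _ _ _ _ _ _ _ hb hd hs
    exact hs.imp (ihφ hb (le_of_max_le_left hd)) (ihψ hb (le_of_max_le_right hd))
  | box a φ ih =>
    intro _ _ _ _ n _ _ hb hd hs u' hu'
    cases n with
    | zero => exact absurd hd (Nat.not_succ_le_zero _)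
    | succ n =>
      obtain ⟨u, hu, hwb⟩ := hb.2 u' hu'
      exact ih (hwb.stateBisim_sigma a) (Nat.le_of_succ_le_succ hd) (hs u hu)
  | wbox a φ ih =>
    intro _ _ _ _ n _ _ hb hd hs u' hu' t' ht'
    cases n with
    | zero => exact absurd hd (Nat.not_succ_le_zero _)
    | succ n =>
      obtain ⟨u, hu, hwb⟩ := hb.2 u' hu'
      obtain ⟨t, ht, htt'⟩ := hwb.2.2 a t' ht'
      exact ih htt' (Nat.le_of_succ_le_succ hd) (hs u hu t ht)

theorem support_iff_of_stateBisim {n : ℕ} {s : Set W} {s' : Set W'} {φ : Formula A P}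
    (h : stateBisim M M' n s s') (hφ : depth φ ≤ n) : support M φ s ↔ support M' φ s' :=
  ⟨support_of_stateBisim φ h hφ, support_of_stateBisim φ h.symm hφ⟩

end Bisimulation

theorem stmt_19_general {W W' A P : Type}
    (M : PreModel W A P) (M' : PreModel W' A P)
    (n : ℕ) (w : W) (w' : W')
    (h : worldBisim M M' n w w') :
    ∀ φ : Formula A P, depth φ ≤ n →
      (support M φ {w} ↔ support M' φ {w'}) :=
  fun _ hφ => support_iff_of_stateBisim (stateBisim_singleton h) hφ

/-- Over a finite signature, `n`-bisimilar world-pointed models agree on all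
InqML formulas of modal nesting depth at most `n`. -/
theorem stmt_19 {W W' A P : Type} [Fintype A] [Fintype P]
    (M : PreModel W A P) (M' : PreModel W' A P)
    (hM : M.IsInqEpi) (hM' : M'.IsInqEpi) (n : ℕ) (w : W) (w' : W')
    (h : worldBisim M M' n w w') :
    ∀ φ : Formula A P, depth φ ≤ n →
      (support M φ {w} ↔ support M' φ {w'}) :=
  stmt_19_general M M' n w w' h
end
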